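/- arXiv:1601.07850 — 9 statements merged into one kernel-verified Lean document; each statement's English description precedes it below -/
import Mathlib

section
/- For all real t with -π/2 < t < π/2, cos(t) ≤ exp(-t²/2 - t⁴/12). -/
open Real

lemma aux_sin_lb (x : ℝ) (hx : 0 ≤ x) : x - x^3/6 ≤ Real.sin x := by
  have key : Monotone (fun x : ℝ => Real.sin x - x + x^3/6) := by
    apply monotone_of_hasDerivAt_nonneg (f' := fun x => Real.cos x - 1 + x^2/2)
    · intro x
      have h : HasDerivAt (fun x : ℝ => Real.sin x - x + x^3/6)
          (Real.cos x - 1 + (↑3 * x ^ 2)/6) x :=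
        ((Real.hasDerivAt_sin x).sub (hasDerivAt_id x)).add
          ((hasDerivAt_pow 3 x).div_const 6)
      convert h using 1; push_cast; ring
    · intro x
      have := Real.one_sub_sq_div_two_le_cos (x := x)
      simp only [Pi.zero_apply]; linarith
  have h0 := key hx
  simp only [Real.sin_zero] at h0
  nlinarith [h0]

lemma aux_cos_ub (x : ℝ) (hx : 0 ≤ x) : Real.cos x ≤ 1 - x^2/2 + x^4/24 := by
  have key : MonotoneOn (fun x : ℝ => 1 - x^2/2 + x^4/24 - Real.cos x) (Set.Ici 0) := by
    apply monotoneOn_of_hasDerivWithinAt_nonneg (f' := fun x => Real.sin x - x + x^3/6)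
      (convex_Ici 0)
    · fun_prop
    · intro x _
      have h : HasDerivAt (fun x : ℝ => 1 - x^2/2 + x^4/24 - Real.cos x)
          (0 - (↑2 * x ^ 1)/2 + (↑4 * x ^ 3)/24 - (-Real.sin x)) x :=
        (((hasDerivAt_const x (1:ℝ)).sub ((hasDerivAt_pow 2 x).div_const 2)).add
          ((hasDerivAt_pow 4 x).div_const 24)).sub (Real.hasDerivAt_cos x)
      have h' : HasDerivAt (fun x : ℝ => 1 - x^2/2 + x^4/24 - Real.cos x)
          (Real.sin x - x + x^3/6) x := by
        convert h using 1; push_cast; ring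
      exact h'.hasDerivWithinAt
    · intro x hx
      rw [interior_Ici] at hx
      have := aux_sin_lb x hx.le
      linarith
  have h0 := key (Set.self_mem_Ici) (Set.mem_Ici.2 hx) hx
  simp only [Real.cos_zero] at h0
  nlinarith [h0]

lemma aux_key (x : ℝ) (hx : 0 ≤ x) (hx2 : x ≤ 2) :
    (x + x^3/3) * Real.cos x - Real.sin x ≤ 0 := by
  have hs := aux_sin_lb x hx
  have hc := aux_cos_ub x hx
  have hnn : 0 ≤ x + x^3/3 := by positivity
  have h1 : (x + x^3/3) * Real.cos x ≤ (x + x^3/3) * (1 - x^2/2 + x^4/24) :=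
    mul_le_mul_of_nonneg_left hc hnn
  have hx5 : 0 ≤ x^5 := pow_nonneg hx 5
  have hxx : 0 ≤ x^5 * (4 - x^2) :=
    mul_nonneg hx5 (by nlinarith)
  nlinarith [hs, h1, hx5, hxx]

theorem stmt_0 (t : ℝ) (h1 : -(π/2) < t) (h2 : t < π/2) :
    Real.cos t ≤ Real.exp (-t^2/2 - t^4/12) := by
  set s := |t| with hs
  have hs0 : 0 ≤ s := abs_nonneg t
  have hslt : s < π/2 := abs_lt.2 ⟨h1, h2⟩
  have hs2 : s ≤ 2 := by
    have : π < 4 := by linarith [Real.pi_lt_d2]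
    linarith
  have hcos : Real.cos t = Real.cos s := (Real.cos_abs t).symm
  have hsq : s^2 = t^2 := sq_abs t
  have hq : s^4 = t^4 := by
    have : s^4 = (s^2)^2 := by ring
    rw [this, hsq]; ring
  -- antitone function
  have anti : AntitoneOn (fun x : ℝ => Real.exp (x^2/2 + x^4/12) * Real.cos x)
      (Set.Icc 0 (π/2)) := by
    apply antitoneOn_of_hasDerivWithinAt_nonpos
      (f' := fun x => Real.exp (x^2/2 + x^4/12) * ((x + x^3/3) * Real.cos x - Real.sin x))
      (convex_Icc 0 (π/2))
    · fun_prop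
    · intro x _
      have he : HasDerivAt (fun x : ℝ => Real.exp (x^2/2 + x^4/12))
          (Real.exp (x^2/2 + x^4/12) * ((↑2 * x ^ 1)/2 + (↑4 * x ^ 3)/12)) x :=
        (((hasDerivAt_pow 2 x).div_const 2).add ((hasDerivAt_pow 4 x).div_const 12)).exp
      have h : HasDerivAt (fun x : ℝ => Real.exp (x^2/2 + x^4/12) * Real.cos x)
          (Real.exp (x^2/2 + x^4/12) * ((↑2 * x ^ 1)/2 + (↑4 * x ^ 3)/12) * Real.cos x +
            Real.exp (x^2/2 + x^4/12) * (-Real.sin x)) x :=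
        he.mul (Real.hasDerivAt_cos x)
      have h' : HasDerivAt (fun x : ℝ => Real.exp (x^2/2 + x^4/12) * Real.cos x)
          (Real.exp (x^2/2 + x^4/12) * ((x + x^3/3) * Real.cos x - Real.sin x)) x := by
        convert h using 1; push_cast; ring
      exact h'.hasDerivWithinAt
    · intro x hx
      rw [interior_Icc] at hx
      have hxle : x ≤ 2 := by
        have : π < 4 := by linarith [Real.pi_lt_d2]
        linarith [hx.2]
      have := aux_key x hx.1.le hxle
      have hep : (0:ℝ) < Real.exp (x^2/2 + x^4/12) := Real.exp_pos _
      exact mul_nonpos_of_nonneg_of_nonpos hep.le this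
  have hmem : s ∈ Set.Icc 0 (π/2) := ⟨hs0, hslt.le⟩
  have h0mem : (0:ℝ) ∈ Set.Icc 0 (π/2) := ⟨le_refl 0, by positivity⟩
  have hF := anti h0mem hmem hs0
  simp only [Real.cos_zero] at hF
  norm_num at hF
  -- hF : exp (s^2/2 + s^4/12) * cos s ≤ 1
  have hep : (0:ℝ) < Real.exp (s^2/2 + s^4/12) := Real.exp_pos _
  have : Real.cos s ≤ Real.exp (-(s^2/2 + s^4/12)) := by
    rw [Real.exp_neg, ← one_div, le_div_iff₀ hep, mul_comm]
    exact hF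
  calc Real.cos t = Real.cos s := hcos
    _ ≤ Real.exp (-(s^2/2 + s^4/12)) := this
    _ = Real.exp (-t^2/2 - t^4/12) := by rw [← hsq, ← hq]; ring_nf
end

section
/- For all real t with 0 ≤ t < π/2, -2·ln(cos t) ≥ t²·(1 + t²/6 + (2/45)·t⁴). -/
open Real Set

/-!
Since `tan' = 1 + tan ^ 2`, a lower bound `q ≤ tan` on `[0, π / 2)` improves itself: any `p` with
`p 0 = 0` and `p' ≤ 1 + q ^ 2` also satisfies `p ≤ tan`. Starting from `x ≤ tan x`, two rounds give
`x + x ^ 3 / 3 + 2 x ^ 5 / 15 ≤ tan x`, and integrating once more, as `(-log ∘ cos)' = tan`, gives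
`x ^ 2 / 2 + x ^ 4 / 12 + x ^ 6 / 45 ≤ -log (cos x)`.
-/

theorem le_of_hasDerivAt_le_of_mem_Ico {a b : ℝ} {f g f' g' : ℝ → ℝ}
    (hf : ∀ x ∈ Ico a b, HasDerivAt f (f' x) x) (hg : ∀ x ∈ Ico a b, HasDerivAt g (g' x) x)
    (hfg : ∀ x ∈ Ico a b, f' x ≤ g' x) (ha : f a ≤ g a) {x : ℝ} (hx : x ∈ Ico a b) :
    f x ≤ g x := by
  have hsub (y : ℝ) (hy : y ∈ Ico a b) : HasDerivAt (g - f) (g' y - f' y) y :=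
    (hg y hy).sub (hf y hy)
  have hmono : MonotoneOn (g - f) (Ico a b) := by
    refine monotoneOn_of_hasDerivWithinAt_nonneg (f' := g' - f') (convex_Ico a b)
      (fun y hy ↦ (hsub y hy).continuousAt.continuousWithinAt) (fun y hy ↦ ?_) (fun y hy ↦ ?_)
    · exact (hsub y (interior_subset hy)).hasDerivWithinAt
    · exact sub_nonneg.2 (hfg y (interior_subset hy))
  have hgap := hmono ⟨le_rfl, hx.1.trans_lt hx.2⟩ hx hx.1
  simp only [Pi.sub_apply] at hgap
  linarith

theorem cos_ne_zero_of_mem_Ico {x : ℝ} (hx : x ∈ Ico 0 (π / 2)) : cos x ≠ 0 :=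
  (cos_pos_of_mem_Ioo ⟨by linarith [pi_pos, hx.1], hx.2⟩).ne'

theorem hasDerivAt_tan_one_add_sq {x : ℝ} (hx : cos x ≠ 0) :
    HasDerivAt tan (1 + tan x ^ 2) x := by
  simpa [← inv_one_add_tan_sq hx] using hasDerivAt_tan hx

theorem hasDerivAt_neg_log_cos {x : ℝ} (hx : cos x ≠ 0) :
    HasDerivAt (fun y ↦ -log (cos y)) (tan x) x := by
  have h : HasDerivAt (fun y ↦ -log (cos y)) (-(-sin x / cos x)) x :=
    ((hasDerivAt_cos x).log hx).neg
  rwa [neg_div, neg_neg, ← tan_eq_sin_div_cos] at h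

theorem le_tan_of_deriv_le_one_add_tan_sq {p p' : ℝ → ℝ} (hp0 : p 0 = 0)
    (hp : ∀ x ∈ Ico 0 (π / 2), HasDerivAt p (p' x) x)
    (hp' : ∀ x ∈ Ico 0 (π / 2), p' x ≤ 1 + tan x ^ 2)
    {x : ℝ} (hx : x ∈ Ico 0 (π / 2)) : p x ≤ tan x :=
  le_of_hasDerivAt_le_of_mem_Ico hp
    (fun y hy ↦ hasDerivAt_tan_one_add_sq (cos_ne_zero_of_mem_Ico hy)) hp' (by simp [hp0]) hx

theorem taylor_three_le_tan {x : ℝ} (hx : x ∈ Ico 0 (π / 2)) :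
    x + x ^ 3 / 3 ≤ tan x := by
  refine le_tan_of_deriv_le_one_add_tan_sq (p := fun x ↦ x + x ^ 3 / 3)
    (p' := fun x ↦ 1 + x ^ 2) (by simp) (fun y _ ↦ ?_) (fun y hy ↦ ?_) hx
  · exact ((hasDerivAt_id y).add ((hasDerivAt_pow 3 y).div_const 3)).congr_deriv (by simp)
  · have := le_tan hy.1 hy.2
    have := hy.1
    gcongr

theorem taylor_five_le_tan {x : ℝ} (hx : x ∈ Ico 0 (π / 2)) :
    x + x ^ 3 / 3 + 2 * x ^ 5 / 15 ≤ tan x := by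
  refine le_tan_of_deriv_le_one_add_tan_sq (p := fun x ↦ x + x ^ 3 / 3 + 2 * x ^ 5 / 15)
    (p' := fun x ↦ 1 + x ^ 2 + 2 * x ^ 4 / 3) (by simp) (fun y _ ↦ ?_) (fun y hy ↦ ?_) hx
  · exact (((hasDerivAt_id y).add ((hasDerivAt_pow 3 y).div_const 3)).add
      (((hasDerivAt_pow 5 y).const_mul 2).div_const 15)).congr_deriv (by simp; ring)
  · have hy0 := hy.1
    have := taylor_three_le_tan hy
    calc 1 + y ^ 2 + 2 * y ^ 4 / 3 ≤ 1 + (y + y ^ 3 / 3) ^ 2 := by nlinarith [pow_nonneg hy0 6]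
      _ ≤ 1 + tan y ^ 2 := by gcongr

theorem taylor_six_le_neg_log_cos {x : ℝ} (hx : x ∈ Ico 0 (π / 2)) :
    x ^ 2 / 2 + x ^ 4 / 12 + x ^ 6 / 45 ≤ -log (cos x) := by
  refine le_of_hasDerivAt_le_of_mem_Ico (f := fun x ↦ x ^ 2 / 2 + x ^ 4 / 12 + x ^ 6 / 45)
    (fun y _ ↦ ?_) (fun y hy ↦ hasDerivAt_neg_log_cos (cos_ne_zero_of_mem_Ico hy))
    (fun y hy ↦ taylor_five_le_tan hy) (by simp) hx
  exact (((hasDerivAt_pow 2 y).div_const 2).add ((hasDerivAt_pow 4 y).div_const 12)).add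
    ((hasDerivAt_pow 6 y).div_const 45) |>.congr_deriv (by simp; ring)

theorem stmt_1 (t : ℝ) (h1 : 0 ≤ t) (h2 : t < π/2) :
    -2 * Real.log (Real.cos t) ≥ t^2 * (1 + t^2/6 + (2/45) * t^4) := by
  have := taylor_six_le_neg_log_cos ⟨h1, h2⟩
  linarith
end

section
/- Let p ≥ 2, A ≥ 1 and B > 0 be real numbers. If (A³/B³)·ln(A) ≥ -ln(B), then A^{p+1} + B^{p+1} ≥ A³ + B³. -/
theorem stmt_2 (p A B : ℝ) (hp : 2 ≤ p) (hA : 1 ≤ A) (hB : 0 < B)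
    (h : (A^3 / B^3) * Real.log A ≥ -Real.log B) :
    A ^ (p + 1) + B ^ (p + 1) ≥ A^3 + B^3 := by
  have hApos : (0:ℝ) < A := lt_of_lt_of_le one_pos hA
  have hB3 : (0:ℝ) < B^3 := by positivity
  have hA3 : (0:ℝ) < A^3 := by positivity
  have hs0 : 0 ≤ p - 2 := by linarith
  have key : A^3 * Real.log A ≥ -(B^3 * Real.log B) := by
    have := mul_le_mul_of_nonneg_right h hB3.le
    calc -(B^3 * Real.log B) = -Real.log B * B^3 := by ring
    _ ≤ (A^3 / B^3) * Real.log A * B^3 := this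
    _ = A^3 * Real.log A := by field_simp
  have hAe : A ^ (p+1) = A^3 * Real.exp (Real.log A * (p-2)) := by
    rw [← Real.rpow_def_of_pos hApos]
    rw [← Real.rpow_natCast A 3, ← Real.rpow_add hApos]
    norm_num; ring_nf
  have hBe : B ^ (p+1) = B^3 * Real.exp (Real.log B * (p-2)) := by
    rw [← Real.rpow_def_of_pos hB]
    rw [← Real.rpow_natCast B 3, ← Real.rpow_add hB]
    norm_num; ring_nf
  have e1 : 1 + (p-2) * Real.log A ≤ Real.exp (Real.log A * (p-2)) := by
    have := Real.add_one_le_exp (Real.log A * (p-2)); linarith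
  have e2 : 1 + (p-2) * Real.log B ≤ Real.exp (Real.log B * (p-2)) := by
    have := Real.add_one_le_exp (Real.log B * (p-2)); linarith
  rw [hAe, hBe]
  nlinarith [mul_le_mul_of_nonneg_left e1 hA3.le, mul_le_mul_of_nonneg_left e2 hB3.le,
    mul_le_mul_of_nonneg_left key hs0]
end

section
/- For all real t with 0 < t < π/2, (π³ - 3π²t + 3πt²)·ln(-2·ln(cos t)/t²) ≥ 2t³·ln((π - t)/t). -/
/-!
Both logarithms are compared with quadrature rules for `∫ ds / s`. Integrating
`tan x ≥ x + x³/3` gives `-log (cos t) ≥ t²/2 + t⁴/12`, so the argument of the left logarithm is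
at least `1 + t²/6`, and the midpoint rule (`1/s` is convex) gives
`log (1 + t²/6) ≥ 2t²/(t² + 12)`. On the right, Simpson's rule overestimates
`log ((π - t)/t) = ∫_t^{π-t} ds / s` because `1/s` has a positive fourth derivative. Comparing the
two rational bounds leaves a quintic inequality in `t` whose coefficients involve `π`; it holds
with some room once `π` is known to six decimals.
-/

open Real Set

theorem le_of_hasDerivAt_le {f g f' g' : ℝ → ℝ} {a b : ℝ} (hab : a ≤ b)
    (hf : ∀ x ∈ Icc a b, HasDerivAt f (f' x) x) (hg : ∀ x ∈ Icc a b, HasDerivAt g (g' x) x)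
    (ha : f a ≤ g a) (hfg : ∀ x ∈ Ico a b, f' x ≤ g' x) : f b ≤ g b :=
  image_le_of_deriv_right_le_deriv_boundary
    (fun x hx => (hf x hx).continuousAt.continuousWithinAt)
    (fun x hx => (hf x (Ico_subset_Icc_self hx)).hasDerivWithinAt) ha
    (fun x hx => (hg x hx).continuousAt.continuousWithinAt)
    (fun x hx => (hg x (Ico_subset_Icc_self hx)).hasDerivWithinAt) hfg ⟨hab, le_rfl⟩

theorem cos_pos_of_mem_Icc_of_lt {a x : ℝ} (hx : x ∈ Icc 0 a) (ha : a < π / 2) : 0 < cos x :=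
  cos_pos_of_mem_Ioo ⟨by linarith [pi_pos, hx.1], hx.2.trans_lt ha⟩

theorem add_cube_div_three_le_tan {x : ℝ} (hx₀ : 0 ≤ x) (hx : x < π / 2) :
    x + x ^ 3 / 3 ≤ tan x := by
  refine le_of_hasDerivAt_le (f' := fun y => 1 + y ^ 2) (g' := fun y => 1 / cos y ^ 2) hx₀
    (fun y _ => by simpa using ((hasDerivAt_id y).add ((hasDerivAt_pow 3 y).div_const 3)))
    (fun y hy => hasDerivAt_tan (cos_pos_of_mem_Icc_of_lt hy hx).ne') (by simp) ?_
  intro y hy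
  have hcos := (cos_pos_of_mem_Icc_of_lt (Ico_subset_Icc_self hy) hx).ne'
  have htan : y ≤ tan y := le_tan hy.1 (hy.2.trans hx)
  rw [one_div, ← inv_one_add_tan_sq hcos, inv_inv]
  nlinarith [hy.1]

theorem sq_div_two_add_pow_four_div_twelve_le_neg_log_cos {x : ℝ} (hx₀ : 0 ≤ x)
    (hx : x < π / 2) : x ^ 2 / 2 + x ^ 4 / 12 ≤ -log (cos x) := by
  refine le_of_hasDerivAt_le (f := fun y => y ^ 2 / 2 + y ^ 4 / 12) (g := fun y => -log (cos y))
    (f' := fun y => y + y ^ 3 / 3) (g' := tan) hx₀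
    (fun y _ => (((hasDerivAt_pow 2 y).div_const 2).add
      ((hasDerivAt_pow 4 y).div_const 12)).congr_deriv (by ring))
    (fun y hy => ((hasDerivAt_cos y).log (cos_pos_of_mem_Icc_of_lt hy hx).ne').neg.congr_deriv
      (by rw [tan_eq_sin_div_cos]; ring))
    (by simp) fun y hy => add_cube_div_three_le_tan hy.1 (hy.2.trans hx)

theorem log_le_simpson {u : ℝ} (hu : 1 ≤ u) :
    log u ≤ (u - u⁻¹) / 6 + 4 * (u - 1) / (3 * (u + 1)) := by
  refine le_of_hasDerivAt_le (f := log) (g := fun y => (y - y⁻¹) / 6 + 4 * (y - 1) / (3 * (y + 1)))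
    (f' := fun y => y⁻¹) (g' := fun y => y⁻¹ + (y - 1) ^ 4 / (6 * y ^ 2 * (y + 1) ^ 2)) hu
    (fun y hy => hasDerivAt_log (by linarith [hy.1])) (fun y hy => ?_) (by simp) ?_
  · have hy : 0 < y := by linarith [hy.1]
    refine ((((hasDerivAt_id' y).sub (hasDerivAt_inv hy.ne')).div_const 6).add
      ((((hasDerivAt_id' y).sub_const 1).const_mul 4).div
        (((hasDerivAt_id' y).add_const 1).const_mul 3) (by positivity))).congr_deriv ?_
    field_simp
    ring
  · intro y hy
    have : 0 ≤ (y - 1) ^ 4 / (6 * y ^ 2 * (y + 1) ^ 2) := by positivity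
    linarith

theorem log_div_le_simpson {x y : ℝ} (hx : 0 < x) (hxy : x ≤ y) :
    log (y / x) ≤ (y - x) / 6 * (1 / x + 8 / (x + y) + 1 / y) := by
  have hy : 0 < y := hx.trans_le hxy
  convert log_le_simpson ((one_le_div hx).2 hxy) using 1
  field_simp
  ring

theorem quintic_nonneg {t : ℝ} (h : t ≤ 2) :
    0 ≤ 1464 - 3049 * t + 1989 * t ^ 2 - 429 * t ^ 3 + 75 * t ^ 4 - 16 * t ^ 5 := by
  -- the minimum on `(-∞, 2]` is about `29`, attained near `t = 1.07`
  nlinarith [sq_nonneg (t - 1.07), mul_nonneg (sub_nonneg.2 h) (sq_nonneg (t - 1.07)),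
    sq_nonneg (t * (t - 1.07))]

theorem simpson_midpoint_poly_le {t : ℝ} (h₀ : 0 ≤ t) (h : t ≤ 2) :
    (π - 2 * t) * (π ^ 2 + 8 * π * t - 8 * t ^ 2) * (t ^ 2 + 12)
      ≤ 6 * π * (π - t) * ((π - t) ^ 3 + t ^ 3) := by
  -- the difference of the two sides dominates `quintic_nonneg` coefficientwise
  have hl := pi_gt_d6
  have hu := pi_lt_d6
  have h2l : (9.869599 : ℝ) < π ^ 2 := by nlinarith
  have h2u : π ^ 2 < 9.869607 := by nlinarith
  have h3l : (31.00625 : ℝ) < π ^ 3 := by nlinarith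
  have h3u : π ^ 3 < 31.00629 := by nlinarith
  have h4l : (97.40898 : ℝ) < π ^ 4 := by nlinarith
  have h4u : π ^ 4 < 97.40916 := by nlinarith
  have h5l : (306.018 : ℝ) < π ^ 5 := by nlinarith
  have hc1 : (0 : ℝ) ≤ 3049 - 24 * π ^ 4 - 72 * π ^ 2 := by linarith
  have hc2 : (0 : ℝ) ≤ 35 * π ^ 3 + 288 * π - 1989 := by linarith
  have hc3 : (0 : ℝ) ≤ 237 - 24 * π ^ 2 := by linarith
  have hc4 : (0 : ℝ) ≤ 24 * π - 75 := by linarith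
  nlinarith [quintic_nonneg h, mul_nonneg hc1 h₀, mul_nonneg hc2 (sq_nonneg t),
    mul_nonneg hc3 (pow_nonneg h₀ 3), mul_nonneg hc4 (pow_nonneg h₀ 4)]

theorem simpson_le_midpoint {t : ℝ} (h₀ : 0 < t) (h : t < π / 2) :
    2 * t ^ 3 * ((π - t - t) / 6 * (1 / t + 8 / (t + (π - t)) + 1 / (π - t)))
      ≤ (π ^ 3 - 3 * π ^ 2 * t + 3 * π * t ^ 2) * (2 * (t ^ 2 / 6) / (t ^ 2 / 6 + 2)) := by
  have hπt : 0 < π - t := by linarith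
  have hpoly := simpson_midpoint_poly_le h₀.le (by linarith [pi_lt_four])
  rw [show t + (π - t) = π by ring]
  field_simp
  nlinarith

theorem stmt_3 (t : ℝ) (h1 : 0 < t) (h2 : t < π/2) :
    (π^3 - 3*π^2*t + 3*π*t^2) * Real.log (-2 * Real.log (Real.cos t) / t^2)
      ≥ 2 * t^3 * Real.log ((π - t) / t) := by
  have hratio : 1 + t ^ 2 / 6 ≤ -2 * log (cos t) / t ^ 2 := by
    rw [le_div_iff₀ (by positivity)]
    nlinarith [sq_div_two_add_pow_four_div_twelve_le_neg_log_cos h1.le h2]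
  have hmidpoint : 2 * (t ^ 2 / 6) / (t ^ 2 / 6 + 2) ≤ log (-2 * log (cos t) / t ^ 2) :=
    (le_log_one_add_of_nonneg (by positivity)).trans (log_le_log (by positivity) hratio)
  have hsimpson := log_div_le_simpson h1 (by linarith : t ≤ π - t)
  have hA : 0 ≤ π ^ 3 - 3 * π ^ 2 * t + 3 * π * t ^ 2 := by
    nlinarith [pow_pos (by linarith : 0 < π - t) 3, pow_pos h1 3]
  calc 2 * t ^ 3 * log ((π - t) / t)
      ≤ 2 * t ^ 3 * ((π - t - t) / 6 * (1 / t + 8 / (t + (π - t)) + 1 / (π - t))) := by gcongr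
    _ ≤ (π ^ 3 - 3 * π ^ 2 * t + 3 * π * t ^ 2) * (2 * (t ^ 2 / 6) / (t ^ 2 / 6 + 2)) :=
      simpson_le_midpoint h1 h2
    _ ≤ (π ^ 3 - 3 * π ^ 2 * t + 3 * π * t ^ 2) * log (-2 * log (cos t) / t ^ 2) := by gcongr
end

section
/- For all real t with 0 < t < π/2, π³ - 3π²t + 3πt² ≥ 12·t·ln((π - t)/t). -/
open Real

theorem stmt_4 (t : ℝ) (h1 : 0 < t) (h2 : t < π/2) :
    π^3 - 3*π^2*t + 3*π*t^2 ≥ 12 * t * Real.log ((π - t) / t) := by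
  have hpi : π > 3.141592 := Real.pi_gt_d6
  have hpi2 : π < 3.15 := Real.pi_lt_d2
  have hπt : 0 < π - t := by linarith
  have hu : 0 < (π - t) / t := div_pos hπt h1
  have hlog : Real.log ((π - t) / t) ≤ (π - t) / t / 2 + Real.log 2 - 1 := by
    have h := Real.log_le_sub_one_of_pos (show (0:ℝ) < (π - t) / t / 2 by positivity)
    have : Real.log ((π - t) / t / 2) = Real.log ((π - t) / t) - Real.log 2 := by
      rw [Real.log_div hu.ne' (by norm_num)]
    linarith [this ▸ h]
  have key : 12 * t * Real.log ((π - t) / t) ≤ 12 * t * ((π - t) / t / 2 + Real.log 2 - 1) := by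
    have := mul_le_mul_of_nonneg_left hlog (by positivity : (0:ℝ) ≤ 12 * t)
    linarith
  have hdiv : t * ((π - t) / t) = π - t := by field_simp
  have hl2 : Real.log 2 < 0.6931472 := Real.log_two_lt_d9.trans_le (by norm_num)
  nlinarith [sq_nonneg (t - 1.055), sq_nonneg t, hπt, key, hdiv, hl2, sq_nonneg (π - 3.1415925)]
end

section
/- For all real t with 0 < t ≤ 1, cot(t) ≥ 1/t - t/3 - t³/40. -/
/-!
Clearing denominators, the claim is `(1 - t²/3 - t⁴/40) sin t ≤ t cos t`, with a nonnegative
coefficient on the left when `t ≤ 1`. Bound `sin t` above by its Taylor polynomial of degree 5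
and `cos t` below by its Taylor polynomial of degree 6; these alternating Taylor bounds follow
one from another by comparing derivatives on `[0, ∞)`, starting from `t - t³/6 ≤ sin t`. What
remains is the polynomial identity
`t (1 - t²/2 + t⁴/24 - t⁶/720) - (1 - t²/3 - t⁴/40) (t - t³/6 + t⁵/120)
  = t⁵ (1 - t²) / 360 + t⁹ / 4800`.
-/

open Real

theorem le_of_deriv_le_of_nonneg {f g : ℝ → ℝ} (hf : Differentiable ℝ f)
    (hg : Differentiable ℝ g) (h0 : f 0 ≤ g 0)
    (hderiv : ∀ x, 0 < x → deriv f x ≤ deriv g x) {x : ℝ} (hx : 0 ≤ x) : f x ≤ g x := by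
  have hmono : MonotoneOn (g - f) (Set.Ici 0) := by
    refine monotoneOn_of_deriv_nonneg (convex_Ici 0) (hg.sub hf).continuous.continuousOn
      (hg.sub hf).differentiableOn fun y hy => ?_
    rw [interior_Ici] at hy
    rw [deriv_sub (hg y) (hf y), sub_nonneg]
    exact hderiv y hy
  have := hmono Set.self_mem_Ici (Set.mem_Ici.2 hx) hx
  simp only [Pi.sub_apply] at this
  linarith

theorem cos_le_one_sub_sq_div_two_add_pow_four {x : ℝ} (hx : 0 ≤ x) :
    cos x ≤ 1 - x ^ 2 / 2 + x ^ 4 / 24 := by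
  refine le_of_deriv_le_of_nonneg (f := cos) (g := fun y => 1 - y ^ 2 / 2 + y ^ 4 / 24)
    (by fun_prop) (by fun_prop) (by simp) (fun y hy => ?_) hx
  simp (disch := fun_prop) only [deriv_cos', deriv_fun_add, deriv_fun_sub, deriv_const',
    deriv_div_const, deriv_fun_pow, deriv_id'', Nat.cast_ofNat]
  nlinarith [sin_ge_sub_cube hy.le]

theorem sin_le_sub_cube_add_pow_five {x : ℝ} (hx : 0 ≤ x) :
    sin x ≤ x - x ^ 3 / 6 + x ^ 5 / 120 := by
  refine le_of_deriv_le_of_nonneg (f := sin) (g := fun y => y - y ^ 3 / 6 + y ^ 5 / 120)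
    (by fun_prop) (by fun_prop) (by simp) (fun y hy => ?_) hx
  simp (disch := fun_prop) only [Real.deriv_sin, deriv_fun_add, deriv_fun_sub,
    deriv_div_const, deriv_fun_pow, deriv_id'', Nat.cast_ofNat]
  nlinarith [cos_le_one_sub_sq_div_two_add_pow_four hy.le]

theorem one_sub_sq_div_two_add_pow_four_sub_pow_six_le_cos {x : ℝ} (hx : 0 ≤ x) :
    1 - x ^ 2 / 2 + x ^ 4 / 24 - x ^ 6 / 720 ≤ cos x := by
  refine le_of_deriv_le_of_nonneg (f := fun y => 1 - y ^ 2 / 2 + y ^ 4 / 24 - y ^ 6 / 720)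
    (g := cos) (by fun_prop) (by fun_prop) (by simp) (fun y hy => ?_) hx
  simp (disch := fun_prop) only [deriv_cos', deriv_fun_add, deriv_fun_sub, deriv_const',
    deriv_div_const, deriv_fun_pow, deriv_id'', Nat.cast_ofNat]
  nlinarith [sin_le_sub_cube_add_pow_five hy.le]

theorem stmt_8 (t : ℝ) (h1 : 0 < t) (h2 : t ≤ 1) :
    Real.cos t / Real.sin t ≥ 1/t - t/3 - t^3/40 := by
  have hsin : 0 < sin t := sin_pos_of_pos_of_lt_pi h1 (h2.trans_lt (by linarith [pi_gt_three]))
  have ht2 : t ^ 2 ≤ 1 := pow_le_one₀ h1.le h2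
  have hcoef : 0 ≤ 1 - t ^ 2 / 3 - t ^ 4 / 40 := by nlinarith
  have hpoly : t * (1 - t ^ 2 / 2 + t ^ 4 / 24 - t ^ 6 / 720)
      - (1 - t ^ 2 / 3 - t ^ 4 / 40) * (t - t ^ 3 / 6 + t ^ 5 / 120)
      = t ^ 5 * (1 - t ^ 2) / 360 + t ^ 9 / 4800 := by ring
  have hcleared : (1 - t ^ 2 / 3 - t ^ 4 / 40) * sin t ≤ t * cos t := calc
    _ ≤ (1 - t ^ 2 / 3 - t ^ 4 / 40) * (t - t ^ 3 / 6 + t ^ 5 / 120) :=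
      mul_le_mul_of_nonneg_left (sin_le_sub_cube_add_pow_five h1.le) hcoef
    _ ≤ t * (1 - t ^ 2 / 2 + t ^ 4 / 24 - t ^ 6 / 720) := by
      have : 0 ≤ t ^ 5 * (1 - t ^ 2) / 360 + t ^ 9 / 4800 := by
        have : 0 ≤ 1 - t ^ 2 := by linarith
        positivity
      linarith
    _ ≤ t * cos t :=
      mul_le_mul_of_nonneg_left (one_sub_sq_div_two_add_pow_four_sub_pow_six_le_cos h1.le) h1.le
  rw [ge_iff_le, le_div_iff₀ hsin]
  calc (1 / t - t / 3 - t ^ 3 / 40) * sin t = (1 - t ^ 2 / 3 - t ^ 4 / 40) * sin t / t := by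
        field_simp
    _ ≤ cos t := by rw [div_le_iff₀ h1]; linarith
end

section
/- For all real t with 0 < t ≤ 1, (1/t³ + 1/(π - t)³)·(-2·ln(cos t))²·cot(t) ≥ 1. -/
/-!
With `g t = (-2 log (cos t))² · cot t / t³ = 1 - t⁴/60 + O(t⁶)`, the inequality is tight to
order `t³` at `0`: the term `1/(π - t)³` contributes about `t³/π³`, which has to beat the
deficit of `g`. Integrating `tan t ≥ t + t³/3 + 2t⁵/15` gives
`-log (cos t) ≥ t²/2 + t⁴/12 + t⁶/45`, and the alternating Taylor bounds for `sin` and `cos` give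
`t cot t ≥ 1 - t²/3 - t⁴/45 - t⁶/300`; together `g t ≥ 1 - t⁴/15` on `(0, 1]`. Finally
`(1 + t³/(π - t)³)(1 - t⁴/15) ≥ 1` amounts to `t (π - t)³ ≤ 15 - t⁴`, which holds as `π < 3.15`.
-/

open Real Finset Nat Set

lemma antitone_pow_div_factorial {x : ℝ} (hx₀ : 0 ≤ x) (hx₁ : x ≤ 1) (m : ℕ) :
    Antitone fun n : ℕ => x ^ (2 * n + m) / (2 * n + m)! := by
  refine antitone_nat_of_succ_le fun n => ?_
  rw [show 2 * (n + 1) + m = 2 * n + m + 2 by ring]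
  exact div_le_div₀ (by positivity) (pow_le_pow_of_le_one hx₀ hx₁ (by omega))
    (by positivity) (by exact_mod_cast Nat.factorial_le (by omega))

namespace Real

variable {x : ℝ}

lemma cos_le_sum_range (hx₀ : 0 ≤ x) (hx₁ : x ≤ 1) (k : ℕ) :
    cos x ≤ ∑ i ∈ range (2 * k + 1), (-1) ^ i * (x ^ (2 * i) / (2 * i)!) :=
  (antitone_pow_div_factorial hx₀ hx₁ 0).tendsto_le_alternating_series
    (by simpa only [mul_div_assoc, add_zero] using (hasSum_cos x).tendsto_sum_nat) k

lemma sum_range_le_cos (hx₀ : 0 ≤ x) (hx₁ : x ≤ 1) (k : ℕ) :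
    ∑ i ∈ range (2 * k), (-1) ^ i * (x ^ (2 * i) / (2 * i)!) ≤ cos x :=
  (antitone_pow_div_factorial hx₀ hx₁ 0).alternating_series_le_tendsto
    (by simpa only [mul_div_assoc, add_zero] using (hasSum_cos x).tendsto_sum_nat) k

lemma sin_le_sum_range (hx₀ : 0 ≤ x) (hx₁ : x ≤ 1) (k : ℕ) :
    sin x ≤ ∑ i ∈ range (2 * k + 1), (-1) ^ i * (x ^ (2 * i + 1) / (2 * i + 1)!) :=
  (antitone_pow_div_factorial hx₀ hx₁ 1).tendsto_le_alternating_series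
    (by simpa only [mul_div_assoc] using (hasSum_sin x).tendsto_sum_nat) k

lemma sum_range_le_sin (hx₀ : 0 ≤ x) (hx₁ : x ≤ 1) (k : ℕ) :
    ∑ i ∈ range (2 * k), (-1) ^ i * (x ^ (2 * i + 1) / (2 * i + 1)!) ≤ sin x :=
  (antitone_pow_div_factorial hx₀ hx₁ 1).alternating_series_le_tendsto
    (by simpa only [mul_div_assoc] using (hasSum_sin x).tendsto_sum_nat) k

lemma cos_pos_of_nonneg_of_le_one (hx₀ : 0 ≤ x) (hx₁ : x ≤ 1) : 0 < cos x :=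
  cos_pos_of_mem_Ioo ⟨by linarith [pi_pos], by linarith [pi_gt_three]⟩

lemma add_cube_div_three_add_le_tan (hx₀ : 0 ≤ x) (hx₁ : x ≤ 1) :
    x + x ^ 3 / 3 + 2 * x ^ 5 / 15 ≤ tan x := by
  have hsin := sum_range_le_sin hx₀ hx₁ 2
  have hcos := cos_le_sum_range hx₀ hx₁ 1
  norm_num [sum_range_succ, Nat.factorial] at hsin hcos
  rw [tan_eq_sin_div_cos, le_div_iff₀ (cos_pos_of_nonneg_of_le_one hx₀ hx₁)]
  have hx2 : x ^ 2 ≤ 1 := pow_le_one₀ hx₀ hx₁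
  nlinarith [mul_le_mul_of_nonneg_left hcos (by positivity : 0 ≤ x + x ^ 3 / 3 + 2 * x ^ 5 / 15),
    pow_nonneg hx₀ 7]

lemma sq_div_two_add_le_neg_log_cos (hx₀ : 0 ≤ x) (hx₁ : x ≤ 1) :
    x ^ 2 / 2 + x ^ 4 / 12 + x ^ 6 / 45 ≤ -log (cos x) := by
  let F : ℝ → ℝ := fun y => -log (cos y) - (y ^ 2 / 2 + y ^ 4 / 12 + y ^ 6 / 45)
  have hF : ∀ y ∈ Icc (0 : ℝ) 1,
      HasDerivAt F (tan y - (y + y ^ 3 / 3 + 2 * y ^ 5 / 15)) y := by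
    intro y hy
    have hc := (cos_pos_of_nonneg_of_le_one hy.1 hy.2).ne'
    refine (((hasDerivAt_cos y).log hc).neg.sub
      ((((hasDerivAt_pow 2 y).div_const 2).add ((hasDerivAt_pow 4 y).div_const 12)).add
        ((hasDerivAt_pow 6 y).div_const 45))).congr_deriv ?_
    rw [tan_eq_sin_div_cos]
    push_cast
    ring
  have hmono : MonotoneOn F (Icc 0 1) :=
    monotoneOn_of_hasDerivWithinAt_nonneg (convex_Icc 0 1)
      (fun y hy => (hF y hy).continuousAt.continuousWithinAt)
      (fun y hy => (hF y (interior_subset hy)).hasDerivWithinAt)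
      (fun y hy => by
        rw [interior_Icc] at hy
        exact sub_nonneg.2 (add_cube_div_three_add_le_tan hy.1.le hy.2.le))
  have := hmono ⟨le_rfl, zero_le_one⟩ ⟨hx₀, hx₁⟩ hx₀
  simp only [F, cos_zero, log_one] at this
  linarith

lemma one_sub_sq_div_three_sub_le_mul_cot (hx₀ : 0 < x) (hx₁ : x ≤ 1) :
    1 - x ^ 2 / 3 - x ^ 4 / 45 - x ^ 6 / 300 ≤ x * (cos x / sin x) := by
  have hsin := sin_le_sum_range hx₀.le hx₁ 1
  have hcos := sum_range_le_cos hx₀.le hx₁ 2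
  norm_num [sum_range_succ, Nat.factorial] at hsin hcos
  have hx2 : x ^ 2 ≤ 1 := pow_le_one₀ hx₀.le hx₁
  have hK : 0 ≤ 1 - x ^ 2 / 3 - x ^ 4 / 45 - x ^ 6 / 300 := by
    nlinarith [pow_le_one₀ (n := 4) hx₀.le hx₁, pow_le_one₀ (n := 6) hx₀.le hx₁]
  rw [← mul_div_assoc, le_div_iff₀ (sin_pos_of_pos_of_lt_pi hx₀ (by linarith [pi_gt_three]))]
  have hpoly : 0 ≤ x ^ 7 * (11 / 10800 - x ^ 2 / 2700 + x ^ 4 / 36000) := by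
    have := pow_nonneg hx₀.le 7
    nlinarith [pow_nonneg hx₀.le 4]
  nlinarith [mul_le_mul_of_nonneg_left hsin hK, mul_le_mul_of_nonneg_left hcos hx₀.le]

end Real

lemma cube_mul_le_sq_neg_two_log_cos_mul_cot {t : ℝ} (ht₀ : 0 < t) (ht₁ : t ≤ 1) :
    t ^ 3 * (1 - t ^ 4 / 15) ≤ (-2 * log (cos t)) ^ 2 * (cos t / sin t) := by
  have hlog : t ^ 2 * (1 + t ^ 2 / 6 + 2 * t ^ 4 / 45) ≤ -2 * log (cos t) := by
    linarith [sq_div_two_add_le_neg_log_cos ht₀.le ht₁]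
  have hcot : (1 - t ^ 2 / 3 - t ^ 4 / 45 - t ^ 6 / 300) / t ≤ cos t / sin t := by
    rw [div_le_iff₀' ht₀]
    exact one_sub_sq_div_three_sub_le_mul_cot ht₀ ht₁
  have hK : 0 ≤ 1 - t ^ 2 / 3 - t ^ 4 / 45 - t ^ 6 / 300 := by
    nlinarith [pow_le_one₀ (n := 4) ht₀.le ht₁, pow_le_one₀ (n := 6) ht₀.le ht₁]
  have hpoly : 1 - t ^ 4 / 15 ≤
      (1 + t ^ 2 / 6 + 2 * t ^ 4 / 45) ^ 2 * (1 - t ^ 2 / 3 - t ^ 4 / 45 - t ^ 6 / 300) := by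
    have h4 := pow_nonneg ht₀.le 4
    nlinarith [mul_nonneg h4 (sub_nonneg.2 (pow_le_one₀ (n := 2) ht₀.le ht₁)),
      mul_nonneg h4 (sub_nonneg.2 (pow_le_one₀ (n := 4) ht₀.le ht₁)),
      mul_nonneg h4 (sub_nonneg.2 (pow_le_one₀ (n := 6) ht₀.le ht₁)),
      mul_nonneg h4 (sub_nonneg.2 (pow_le_one₀ (n := 8) ht₀.le ht₁)),
      mul_nonneg h4 (sub_nonneg.2 (pow_le_one₀ (n := 10) ht₀.le ht₁))]
  calc t ^ 3 * (1 - t ^ 4 / 15)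
      ≤ t ^ 3 * ((1 + t ^ 2 / 6 + 2 * t ^ 4 / 45) ^ 2 *
          (1 - t ^ 2 / 3 - t ^ 4 / 45 - t ^ 6 / 300)) := by gcongr
    _ = (t ^ 2 * (1 + t ^ 2 / 6 + 2 * t ^ 4 / 45)) ^ 2 *
          ((1 - t ^ 2 / 3 - t ^ 4 / 45 - t ^ 6 / 300) / t) := by field_simp
    _ ≤ (-2 * log (cos t)) ^ 2 * (cos t / sin t) := by gcongr

lemma one_le_inv_cube_add_inv_cube_mul {t : ℝ} (ht₀ : 0 < t) (ht₁ : t ≤ 1) :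
    1 ≤ (1 / t ^ 3 + 1 / (π - t) ^ 3) * (t ^ 3 * (1 - t ^ 4 / 15)) := by
  have hpt : 0 < π - t := by linarith [pi_gt_three]
  have hcube : (π - t) ^ 3 ≤ (3.15 - t) ^ 3 := by gcongr; linarith [pi_lt_d2]
  have hcubic : t * (π - t) ^ 3 ≤ 15 - t ^ 4 := by
    nlinarith [mul_le_mul_of_nonneg_left hcube ht₀.le, mul_nonneg ht₀.le (sub_nonneg.2 ht₁),
      mul_nonneg (mul_nonneg ht₀.le ht₀.le) (sub_nonneg.2 ht₁)]
  rw [← sub_nonneg, show (1 / t ^ 3 + 1 / (π - t) ^ 3) * (t ^ 3 * (1 - t ^ 4 / 15)) - 1 =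
    t ^ 3 * (15 - t ^ 4 - t * (π - t) ^ 3) / (15 * (π - t) ^ 3) by field_simp; ring]
  have := sub_nonneg.2 hcubic
  positivity

theorem stmt_11 (t : ℝ) (h1 : 0 < t) (h2 : t ≤ 1) :
    (1 / t^3 + 1 / (π - t)^3) * (-2 * Real.log (Real.cos t))^2 * (Real.cos t / Real.sin t) ≥ 1 := by
  have hpt : 0 < π - t := by linarith [pi_gt_three]
  calc 1 ≤ (1 / t ^ 3 + 1 / (π - t) ^ 3) * (t ^ 3 * (1 - t ^ 4 / 15)) :=
        one_le_inv_cube_add_inv_cube_mul h1 h2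
    _ ≤ (1 / t ^ 3 + 1 / (π - t) ^ 3) * ((-2 * log (cos t)) ^ 2 * (cos t / sin t)) :=
        mul_le_mul_of_nonneg_left (cube_mul_le_sq_neg_two_log_cos_mul_cot h1 h2) (by positivity)
    _ = _ := by ring
end

section
/- For all real t ≥ π/2 and all real p with 2 ≤ p ≤ 3, ln(t)/t^{p+1} ≥ 1.75·(2/π)^p·(1/t⁴). -/
/-!
Writing `t ^ (p + 1) = t ^ 4 / t ^ (3 - p)`, the claim becomes `1.75 * (2/π) ^ p ≤ log t * t ^ (3 - p)`.
For `p ≤ 3` the right side is nondecreasing in `t ≥ 1`, so it suffices to take `t = π/2`, where it equals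
`log (π/2) * π³/8 * (2/π) ^ p`; the numerical fact `log (π/2) ≥ 14/π³` (≈ 0.45158 vs 0.45152) finishes.
-/

open Real

lemma fourteen_div_pi_cube_le_log_pi_div_two : 14 / π ^ 3 ≤ log (π / 2) := by
  have hpi : (3.141592 : ℝ) < π := pi_gt_d6
  have hexp : exp 0.451523 ≤ π / 2 := by
    have h := exp_bound' (x := (0.451523 : ℝ)) (by norm_num) (by norm_num) (n := 7) (by norm_num)
    have hsum : (∑ m ∈ Finset.range 7, (0.451523 : ℝ) ^ m / m.factorial) +
        (0.451523 : ℝ) ^ 7 * (7 + 1) / ((7 : ℕ).factorial * 7) ≤ 1.570796 := by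
      simp only [Finset.sum_range_succ, Finset.sum_range_zero]
      norm_num [Nat.factorial]
    linarith
  have hlog : 0.451523 ≤ log (π / 2) := (le_log_iff_exp_le (by positivity)).2 hexp
  have hcube : 14 / π ^ 3 ≤ 0.451523 := by
    rw [div_le_iff₀ (by positivity)]
    nlinarith [sq_nonneg (π - 3.141592)]
  linarith

lemma log_mul_rpow_le_log_mul_rpow {a s t : ℝ} (ha : 0 ≤ a) (hs : 1 ≤ s) (hst : s ≤ t) :
    log s * s ^ a ≤ log t * t ^ a :=
  mul_le_mul (log_le_log (by linarith) hst) (rpow_le_rpow (by linarith) hst ha)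
    (by positivity) (log_nonneg (hs.trans hst))

lemma div_rpow_add_one_eq {t : ℝ} (ht : 0 < t) (x p : ℝ) :
    x / t ^ (p + 1) = x * t ^ (3 - p) / t ^ 4 := by
  have h : t ^ (p + 1) * t ^ (3 - p) = t ^ 4 := by
    rw [← rpow_add ht, show p + 1 + (3 - p) = ((4 : ℕ) : ℝ) by push_cast; ring, rpow_natCast]
  rw [← h, mul_div_mul_right _ _ (rpow_pos_of_pos ht _).ne']

lemma pi_div_two_rpow_three_sub (p : ℝ) :
    (π / 2) ^ (3 - p) = π ^ 3 / 8 * (2 / π) ^ p := by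
  have hb : 0 < π / 2 := by positivity
  rw [rpow_sub hb, show (3 : ℝ) = ((3 : ℕ) : ℝ) by norm_num, rpow_natCast,
    div_rpow two_pos.le pi_pos.le, div_rpow pi_pos.le two_pos.le]
  field_simp
  norm_num

theorem stmt_15_general (t p : ℝ) (ht : π/2 ≤ t) (hp2 : p ≤ 3) :
    Real.log t / t ^ (p + 1) ≥ 1.75 * (2/π) ^ p * (1 / t^4) := by
  have hone : 1 ≤ π / 2 := by linarith [pi_gt_three]
  have ht0 : 0 < t := by linarith
  have hbase : 1.75 * (2 / π) ^ p ≤ log (π / 2) * (π / 2) ^ (3 - p) := by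
    have hlog := fourteen_div_pi_cube_le_log_pi_div_two
    rw [div_le_iff₀ (by positivity)] at hlog
    rw [pi_div_two_rpow_three_sub, ← mul_assoc]
    gcongr
    linarith
  have hkey : 1.75 * (2 / π) ^ p ≤ log t * t ^ (3 - p) :=
    hbase.trans (log_mul_rpow_le_log_mul_rpow (by linarith) hone ht)
  rw [div_rpow_add_one_eq ht0, ge_iff_le, mul_one_div]
  gcongr

theorem stmt_15 (t p : ℝ) (ht : π/2 ≤ t) (hp1 : 2 ≤ p) (hp2 : p ≤ 3) :
    Real.log t / t ^ (p + 1) ≥ 1.75 * (2/π) ^ p * (1 / t^4) :=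
  stmt_15_general t p ht hp2
end

section
/- For all real x with 0 ≤ x ≤ 0.25, x^{√2} ≤ (√2 - 1)·x² + (2 - √2 - 0.126)·x. -/
theorem stmt_17 (x : ℝ) (h1 : 0 ≤ x) (h2 : x ≤ 0.25) :
    x ^ (Real.sqrt 2) ≤ (Real.sqrt 2 - 1) * x^2 + (2 - Real.sqrt 2 - 0.126) * x := by
  set s := Real.sqrt 2 with hs_def
  have hs2 : s ^ 2 = 2 := Real.sq_sqrt (by norm_num)
  have hs0 : 0 ≤ s := Real.sqrt_nonneg 2
  have hlb : 1.4142135 ≤ s := by nlinarith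
  have hub : s ≤ 1.4142136 := by nlinarith
  rcases eq_or_lt_of_le h1 with h0 | hx
  · rw [← h0, Real.zero_rpow (by nlinarith)]
    norm_num
  -- C := 2 ^ (-(53/64))
  set C : ℝ := (2 : ℝ) ^ (-(53 / 64) : ℝ) with hC_def
  have hCub : C ≤ 0.5633398 := by
    have h64 : C ^ (64 : ℕ) = (2 : ℝ) ^ (-(53 : ℝ)) := by
      rw [hC_def, ← Real.rpow_natCast (_ ^ _) 64, ← Real.rpow_mul (by norm_num)]
      norm_num
    have hb : (2 : ℝ) ^ (-(53 : ℝ)) ≤ (0.5633398 : ℝ) ^ (64 : ℕ) := by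
      have he : (2 : ℝ) ^ (-(53 : ℝ)) = ((2 : ℝ) ^ (53 : ℕ))⁻¹ := by
        rw [← Real.rpow_natCast 2 53, ← Real.rpow_neg (by norm_num)]
        norm_num
      rw [he, inv_le_iff_one_le_mul₀ (by positivity)]
      norm_num
    have hCpos : 0 < C := Real.rpow_pos_of_pos (by norm_num) _
    by_contra hcon
    push_neg at hcon
    have : (0.5633398 : ℝ) ^ (64 : ℕ) < C ^ (64 : ℕ) :=
      pow_lt_pow_left₀ hcon (by norm_num) (by norm_num)
    rw [h64] at this
    linarith
  have hClb : (1 / 2 : ℝ) ≤ C := by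
    have : (2 : ℝ) ^ (-1 : ℝ) ≤ C :=
      Real.rpow_le_rpow_of_exponent_le (by norm_num) (by norm_num)
    rwa [Real.rpow_neg_one, ← one_div] at this
  -- bound x ^ (s - 1)
  have hbern : x ^ (s - 1) ≤ C * (1 + (s - 1) * (4 * x - 1)) := by
    have hx4 : (0 : ℝ) ≤ 4 * x := by linarith
    have hsplit : x ^ (s - 1) = (1 / 4 : ℝ) ^ (s - 1) * (4 * x) ^ (s - 1) := by
      rw [← Real.mul_rpow (by norm_num) hx4]
      congr 1
      ring
    have hB : (4 * x) ^ (s - 1) ≤ 1 + (s - 1) * (4 * x - 1) := by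
      have := rpow_one_add_le_one_add_mul_self (s := 4 * x - 1)
        (by linarith) (p := s - 1) (by linarith) (by linarith)
      simpa using this
    have hquart : (1 / 4 : ℝ) ^ (s - 1) ≤ C := by
      have h2r : (1 / 4 : ℝ) = (2 : ℝ) ^ (-2 : ℝ) := by
        rw [show (-2 : ℝ) = ((-2 : ℤ) : ℝ) by norm_num, Real.rpow_intCast]
        norm_num
      have h14 : (1 / 4 : ℝ) ^ (s - 1) = (2 : ℝ) ^ (-2 * (s - 1)) := by
        rw [h2r, ← Real.rpow_mul (by norm_num)]
      rw [h14, hC_def]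
      exact Real.rpow_le_rpow_of_exponent_le (by norm_num) (by nlinarith)
    have hbr : (0 : ℝ) ≤ 1 + (s - 1) * (4 * x - 1) := by nlinarith
    calc x ^ (s - 1) = (1 / 4 : ℝ) ^ (s - 1) * (4 * x) ^ (s - 1) := hsplit
      _ ≤ C * (1 + (s - 1) * (4 * x - 1)) := by
          apply mul_le_mul hquart hB (Real.rpow_nonneg hx4 _) (by linarith)
  -- linear comparison
  have hlin : C * (1 + (s - 1) * (4 * x - 1)) ≤ (s - 1) * x + (2 - s - 0.126) := by
    nlinarith [mul_nonneg (mul_nonneg (by linarith : (0:ℝ) ≤ 1/4 - x)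
      (by linarith : (0:ℝ) ≤ 4 * C - 1)) (by linarith : (0:ℝ) ≤ s - 1)]
  -- assemble
  have hsplit2 : x ^ s = x * x ^ (s - 1) := by
    have h := Real.rpow_one_add' (y := s - 1) h1 (by nlinarith : 1 + (s - 1) ≠ 0)
    rw [show 1 + (s - 1) = s by ring] at h
    exact h
  rw [hsplit2]
  calc x * x ^ (s - 1) ≤ x * ((s - 1) * x + (2 - s - 0.126)) := by
        apply mul_le_mul_of_nonneg_left (le_trans hbern hlin) h1
    _ = (s - 1) * x ^ 2 + (2 - s - 0.126) * x := by ring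
end
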